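/- Let A, B, C be three non-collinear points of the Euclidean plane with dist(A,C) < dist(A,B). Let G be a point on the line through B and C such that C lies strictly between B and G. If dist(G,B) · dist(A,C) = dist(G,C) · dist(A,B), then AG bisects the exterior angle of the triangle at A, i.e. ∠GAB + ∠GAC = π. -/

import Mathlib

open EuclideanGeometry

private lemma sin_vec_aux {V : Type*} [NormedAddCommGroup V] [InnerProductSpace ℝ V] (u v : V) :
    Real.sin (InnerProductGeometry.angle u v) * (‖u‖ * ‖v‖) =
      Real.sin (InnerProductGeometry.angle (-u) (v - u)) * (‖u‖ * ‖v - u‖) := by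
  rw [show ‖u‖ * ‖v - u‖ = ‖-u‖ * ‖v - u‖ by rw [norm_neg]]
  rw [InnerProductGeometry.sin_angle_mul_norm_mul_norm,
    InnerProductGeometry.sin_angle_mul_norm_mul_norm]
  congr 1
  simp only [inner_sub_left, inner_sub_right, inner_neg_left, inner_neg_right, neg_neg, neg_sub]
  rw [real_inner_comm v u]
  ring

/-- Law of sines (two-vertex form) for points. -/
private lemma sin_pt_aux (p q r : EuclideanSpace ℝ (Fin 2)) :
    Real.sin (∠ q p r) * (dist p q * dist p r) =
      Real.sin (∠ p q r) * (dist q p * dist q r) := by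
  have h := sin_vec_aux (q -ᵥ p) (r -ᵥ p)
  have h1 : (p -ᵥ q : EuclideanSpace ℝ (Fin 2)) = -(q -ᵥ p) := (neg_vsub_eq_vsub_rev q p).symm
  have h2 : (r -ᵥ q : EuclideanSpace ℝ (Fin 2)) = (r -ᵥ p) - (q -ᵥ p) :=
    (vsub_sub_vsub_cancel_right r q p).symm
  calc Real.sin (∠ q p r) * (dist p q * dist p r)
      = Real.sin (InnerProductGeometry.angle (q -ᵥ p) (r -ᵥ p)) * (‖q -ᵥ p‖ * ‖r -ᵥ p‖) := by
        rw [EuclideanGeometry.angle, dist_eq_norm_vsub, dist_eq_norm_vsub,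
          ← norm_neg (p -ᵥ q), ← norm_neg (p -ᵥ r), neg_vsub_eq_vsub_rev, neg_vsub_eq_vsub_rev]
    _ = Real.sin (InnerProductGeometry.angle (-(q -ᵥ p)) ((r -ᵥ p) - (q -ᵥ p))) *
          (‖q -ᵥ p‖ * ‖(r -ᵥ p) - (q -ᵥ p)‖) := h
    _ = Real.sin (∠ p q r) * (dist q p * dist q r) := by
        rw [EuclideanGeometry.angle, h1, h2,
          dist_eq_norm_vsub' (EuclideanSpace ℝ (Fin 2)) q p,
          dist_eq_norm_vsub' (EuclideanSpace ℝ (Fin 2)) q r, h1, h2, norm_neg]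

private lemma sin_eq_cases_aux {a b : ℝ} (ha0 : 0 ≤ a) (hapi : a ≤ Real.pi) (hb0 : 0 ≤ b)
    (hbpi : b ≤ Real.pi) (h : Real.sin a = Real.sin b) : a = b ∨ a + b = Real.pi := by
  have hpi := Real.pi_pos
  rcases le_or_gt a (Real.pi / 2) with h1 | h1 <;> rcases le_or_gt b (Real.pi / 2) with h2 | h2
  · exact Or.inl (Real.injOn_sin ⟨by linarith, h1⟩ ⟨by linarith, h2⟩ h)
  · right
    have : a = Real.pi - b :=
      Real.injOn_sin ⟨by linarith, h1⟩ ⟨by linarith, by linarith⟩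
        (by rw [Real.sin_pi_sub]; exact h)
    linarith
  · right
    have : Real.pi - a = b :=
      Real.injOn_sin ⟨by linarith, by linarith⟩ ⟨by linarith, h2⟩
        (by rw [Real.sin_pi_sub]; exact h)
    linarith
  · left
    have : Real.pi - a = Real.pi - b :=
      Real.injOn_sin ⟨by linarith, by linarith⟩ ⟨by linarith, by linarith⟩
        (by rw [Real.sin_pi_sub, Real.sin_pi_sub]; exact h)
    linarith

/-- Converse of the exterior angle bisector theorem: if `AC < AB`, `C` lies strictly
between `B` and `G`, and `GB · AC = GC · AB`, then `AG` bisects the exterior angle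
at `A`, i.e. `∠GAB + ∠GAC = π`. -/
theorem exterior_angle_bisector_converse (A B C G : EuclideanSpace ℝ (Fin 2))
    (hABC : AffineIndependent ℝ ![A, B, C])
    (hlt : dist A C < dist A B)
    (hG : Sbtw ℝ B C G)
    (hratio : dist G B * dist A C = dist G C * dist A B) :
    ∠ G A B + ∠ G A C = Real.pi := by
  have hnc : ¬ Collinear ℝ ({A, B, C} : Set (EuclideanSpace ℝ (Fin 2))) :=
    affineIndependent_iff_not_collinear_set.mp hABC
  have hBA : B ≠ A := fun h =>
    absurd (hABC.injective (show ![A, B, C] 1 = ![A, B, C] 0 by simp [h])) (by decide)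
  have hCA : C ≠ A := fun h =>
    absurd (hABC.injective (show ![A, B, C] 2 = ![A, B, C] 0 by simp [h])) (by decide)
  have hGA : G ≠ A := by
    intro h0
    subst h0
    exact hnc (hG.wbtw.collinear.subset (by intro x hx; simp at hx ⊢; tauto))
  -- distances are positive
  have dAB : (0:ℝ) < dist A B := dist_pos.2 (Ne.symm hBA)
  have dAC : (0:ℝ) < dist A C := dist_pos.2 (Ne.symm hCA)
  have dAG : (0:ℝ) < dist A G := dist_pos.2 (Ne.symm hGA)
  have dGB : (0:ℝ) < dist G B := dist_pos.2 (Ne.symm hG.left_ne_right)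
  have dGC : (0:ℝ) < dist G C := dist_pos.2 (Ne.symm hG.ne_right)
  -- parametrize C on segment B G
  obtain ⟨t, ht, hC⟩ : ∃ t ∈ Set.Icc (0:ℝ) 1, B + t • (G - B) = C := by
    have := hG.wbtw.mem_segment
    rw [segment_eq_image' ℝ B G] at this
    exact this
  have ht0 : (0:ℝ) < t := by
    rcases lt_or_eq_of_le ht.1 with h | h
    · exact h
    · exfalso; apply hG.ne_left; rw [← hC, ← h]; simp
  have ht1 : t < 1 := by
    rcases lt_or_eq_of_le ht.2 with h | h
    · exact h
    · exfalso; apply hG.ne_right; rw [← hC, h]; simp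
  have hCB : (C -ᵥ B : EuclideanSpace ℝ (Fin 2)) = t • (G -ᵥ B) := by
    simp only [vsub_eq_sub, ← hC]; abel
  have hCG : (C -ᵥ G : EuclideanSpace ℝ (Fin 2)) = (1 - t) • (B -ᵥ G) := by
    simp only [vsub_eq_sub, ← hC, sub_smul, smul_sub, one_smul]; abel
  -- same-ray angle equalities
  have e1 : ∠ A B C = ∠ A B G := by
    show InnerProductGeometry.angle (A -ᵥ B) (C -ᵥ B)
        = InnerProductGeometry.angle (A -ᵥ B) (G -ᵥ B)
    rw [hCB, InnerProductGeometry.angle_smul_right_of_pos _ _ ht0]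
  have e2 : ∠ A G C = ∠ A G B := by
    show InnerProductGeometry.angle (A -ᵥ G) (C -ᵥ G)
        = InnerProductGeometry.angle (A -ᵥ G) (B -ᵥ G)
    rw [hCG, InnerProductGeometry.angle_smul_right_of_pos _ _ (by linarith)]
  -- triangle angle sums
  have t1 : ∠ A B G + ∠ B G A + ∠ G A B = Real.pi :=
    EuclideanGeometry.angle_add_angle_add_angle_eq_pi (V := EuclideanSpace ℝ (Fin 2)) (P := EuclideanSpace ℝ (Fin 2)) (p₂ := B) G hBA
  have t2 : ∠ A C G + ∠ C G A + ∠ G A C = Real.pi :=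
    EuclideanGeometry.angle_add_angle_add_angle_eq_pi (V := EuclideanSpace ℝ (Fin 2)) (P := EuclideanSpace ℝ (Fin 2)) (p₂ := C) G hCA
  have t3 : ∠ A B C + ∠ B C A + ∠ C A B = Real.pi :=
    EuclideanGeometry.angle_add_angle_add_angle_eq_pi (V := EuclideanSpace ℝ (Fin 2)) (P := EuclideanSpace ℝ (Fin 2)) (p₂ := B) C hBA
  have hw0 : (G -ᵥ B : EuclideanSpace ℝ (Fin 2)) ≠ 0 := fun h =>
    hG.left_ne_right (vsub_eq_zero_iff_eq.mp h).symm
  have hBCv : (B -ᵥ C : EuclideanSpace ℝ (Fin 2)) = (-t) • (G -ᵥ B) := by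
    simp only [vsub_eq_sub, ← hC, neg_smul]; abel
  have hGCv : (G -ᵥ C : EuclideanSpace ℝ (Fin 2)) = (1 - t) • (G -ᵥ B) := by
    simp only [vsub_eq_sub, ← hC, sub_smul, one_smul]; abel
  have hangle : InnerProductGeometry.angle (B -ᵥ C) (G -ᵥ C) = Real.pi := by
    rw [hBCv, hGCv, InnerProductGeometry.angle_smul_right_of_pos _ _ (by linarith : (0:ℝ) < 1 - t),
      InnerProductGeometry.angle_smul_left_of_neg _ _ (by linarith : -t < 0),
      InnerProductGeometry.angle_neg_self_of_nonzero hw0]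
  have t4 : ∠ B C A + ∠ G C A = Real.pi :=
    InnerProductGeometry.angle_add_angle_eq_pi_of_angle_eq_pi (A -ᵥ C) hangle
  have comm3 : ∠ G C A = ∠ A C G := EuclideanGeometry.angle_comm _ _ _
  have comm1 : ∠ B G A = ∠ A G B := EuclideanGeometry.angle_comm _ _ _
  have comm2 : ∠ C G A = ∠ A G C := EuclideanGeometry.angle_comm _ _ _
  -- additivity of the angle at A
  have hadd : ∠ G A B = ∠ G A C + ∠ C A B := by linarith
  -- angle B A C is positive
  have hCABne : ∠ C A B ≠ 0 := by
    intro h0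
    rcases EuclideanGeometry.angle_eq_zero_iff_ne_and_wbtw.mp h0 with ⟨_, hw⟩ | ⟨_, hw⟩
    · exact hnc (hw.collinear.subset (by intro x hx; simp at hx ⊢; tauto))
    · exact hnc (hw.collinear.subset (by intro x hx; simp at hx ⊢; tauto))
  have hCABpos : 0 < ∠ C A B :=
    lt_of_le_of_ne (EuclideanGeometry.angle_nonneg _ _ _) (Ne.symm hCABne)
  -- law of sines in triangles ABG and ACG (shared vertex G)
  have f1 := sin_pt_aux A G B
  have f2 := sin_pt_aux A G C
  rw [e2] at f2
  rw [dist_comm G A] at f1 f2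
  have g1 : Real.sin (∠ G A B) * dist A B = Real.sin (∠ A G B) * dist G B := by
    apply mul_left_cancel₀ (ne_of_gt dAG)
    linear_combination f1
  have g2 : Real.sin (∠ G A C) * dist A C = Real.sin (∠ A G B) * dist G C := by
    apply mul_left_cancel₀ (ne_of_gt dAG)
    linear_combination f2
  have hsin : Real.sin (∠ G A B) = Real.sin (∠ G A C) := by
    apply mul_right_cancel₀ (b := dist A B * dist G C)
      (ne_of_gt (mul_pos dAB dGC))
    linear_combination dist G C * g1 - dist G B * g2 + Real.sin (∠ G A C) * hratio
  rcases sin_eq_cases_aux (EuclideanGeometry.angle_nonneg _ _ _)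
      (EuclideanGeometry.angle_le_pi _ _ _) (EuclideanGeometry.angle_nonneg _ _ _)
      (EuclideanGeometry.angle_le_pi _ _ _) hsin with h | h
  · exfalso; rw [hadd] at h; linarith
  · exact h
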